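/- In the ring of Laurent polynomials ℤ[T, T⁻¹], define χ(n) := Σ_{i=0}^{n} T^{n−2i} for n ∈ ℕ. Then for all r, s ∈ ℕ with r ≥ s, one has χ(r)·χ(s) = Σ_{m=0}^{s} χ(r + s − 2m). -/

import Mathlib

/-!
Multiplying by the Weyl denominator `T - T⁻¹`, which is a nonzerodivisor, turns `χ(n)` into
`T^(n+1) - T^(-(n+1))`. Since `χ(s)` is invariant under `T ↦ T⁻¹`, both sides of the identity
then become `∑_{m=0}^{s} (T^(r+s+1-2m) - T^(-(r+s+1-2m)))`.
-/

noncomputable section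

/-- The Weyl character `χ(n) = Tⁿ + Tⁿ⁻² + ⋯ + T⁻ⁿ = ∑_{i=0}^{n} T^{n-2i}` of the `SL₂`
module `∇(n)`, as a Laurent polynomial in `ℤ[T, T⁻¹]`. -/
def chi (n : ℕ) : LaurentPolynomial ℤ :=
  ∑ i ∈ Finset.range (n + 1), LaurentPolynomial.T ((n : ℤ) - 2 * i)

open LaurentPolynomial Finset

theorem LaurentPolynomial.T_one_sub_T_neg_one_ne_zero {R : Type*} [Ring R] [Nontrivial R] :
    (T 1 - T (-1) : R[T;T⁻¹]) ≠ 0 := fun h ↦ by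
  simpa using congrArg (fun p : R[T;T⁻¹] ↦ p.coeff 1) h

theorem T_mul_chi (k : ℤ) (n : ℕ) :
    T k * chi n = ∑ i ∈ range (n + 1), T (k + n - 2 * i) := by
  simp only [chi, mul_sum, ← T_add, add_sub_assoc]

theorem invert_chi (n : ℕ) : invert (chi n) = chi n := by
  rw [chi, map_sum, ← sum_range_reflect]
  refine sum_congr rfl fun i hi ↦ ?_
  rw [invert_T]
  congr 1
  push_cast [Nat.cast_sub (Nat.le_of_lt_succ (mem_range.mp hi))]
  ring

theorem T_one_sub_T_neg_one_mul_chi (n : ℕ) :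
    (T 1 - T (-1)) * chi n = T (n + 1) - T (-(n + 1)) := by
  rw [sub_mul, T_mul_chi, T_mul_chi, sum_range_succ', sum_range_succ]
  have shift (i : ℕ) : (1 + n - 2 * (i + 1 : ℕ) : ℤ) = -1 + n - 2 * i := by
    push_cast
    ring
  simp only [shift]
  ring_nf

/-- For `r ≥ s`, `χ(r) · χ(s) = ∑_{m=0}^{s} χ(r + s − 2m)`: the character of
`∇(r) ⊗ ∇(s)`. -/
theorem chi_mul_chi (r s : ℕ) (h : s ≤ r) :
    chi r * chi s = ∑ m ∈ Finset.range (s + 1), chi (r + s - 2 * m) := by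
  refine mul_left_cancel₀ T_one_sub_T_neg_one_ne_zero ?_
  calc (T 1 - T (-1)) * (chi r * chi s) = T (r + 1) * chi s - invert (T (r + 1) * chi s) := by
        rw [← mul_assoc, T_one_sub_T_neg_one_mul_chi, sub_mul, map_mul, invert_T, invert_chi]
    _ = ∑ m ∈ range (s + 1), (T (r + 1 + s - 2 * m) - T (-(r + 1 + s - 2 * m))) := by
        simp only [T_mul_chi, map_sum, invert_T, sum_sub_distrib]
    _ = (T 1 - T (-1)) * ∑ m ∈ range (s + 1), chi (r + s - 2 * m) := by
        rw [mul_sum]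
        refine sum_congr rfl fun m hm ↦ ?_
        have hm_lt : m < s + 1 := mem_range.mp hm
        rw [T_one_sub_T_neg_one_mul_chi]
        congr 2 <;> omega

end
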